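/- Invariance property (g₁ = g₂ = g in Proposition 2): a simultaneous rotation of both the crop and the scene by g ∈ Cₙ rotates the output pixelwise but leaves the channel order unchanged: Ψ(T_g⁰ c) ⋆ φ(T_g⁰ o) = T_g⁰ ( Ψ(c) ⋆ φ(o) ). -/

import Mathlib

/-!
Rotations of the plane commute, so lifting the kernel of a rotated crop gives the lifted kernel of
the crop with every channel rotated and no channel moved. Rotating both kernel and scene is then
undone by reindexing the lattice sum of the cross-correlation along the permutation of `ℤ²`
induced by the rotation.
-/

open Matrix

/-- The planar rotation matrix by angle `θ`. -/
noncomputable def Rot (θ : ℝ) : Matrix (Fin 2) (Fin 2) ℝ :=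
  !![Real.cos θ, -Real.sin θ; Real.sin θ, Real.cos θ]

/-- The action `T⁰` of the group element `g^i` (where `g = Rot_{2π/n}` generates `Cₙ`
and `i : ZMod n`) on images `f : ℝ² → ℝ`, given by `(T_{g^i}⁰ f)(x) = f(g^{-i} x)`. -/
noncomputable def Tpow (n : ℕ) (i : ZMod n) (f : (Fin 2 → ℝ) → ℝ) : (Fin 2 → ℝ) → ℝ :=
  fun x => f ((Rot (-(2 * Real.pi * i.val / n))).mulVec x)

/-- Embedding of the integer lattice `ℤ²` into `ℝ²`. -/
def toR (w : Fin 2 → ℤ) : Fin 2 → ℝ := fun i => (w i : ℝ)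

/-- Channelwise cross-correlation of an `n`-channel kernel `K` with an image `h`:
`(K ⋆ h)(v)ᵢ = ∑_{w ∈ ℤ²} Kᵢ(w) h(v + w)`. -/
noncomputable def xcorrN (n : ℕ) (K : ZMod n → ((Fin 2 → ℝ) → ℝ))
    (h : (Fin 2 → ℝ) → ℝ) : (Fin 2 → ℝ) → ZMod n → ℝ :=
  fun v i => ∑' w : Fin 2 → ℤ, K i (toR w) * h (v + toR w)

/-- `Ψ(c) = ℛₙ(ψ(c))`: the `n`-channel lifted kernel, `Ψ(c)ᵢ = T_{g^i}⁰(ψ(c))`. -/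
noncomputable def PsiLift (n : ℕ) (ψ : ((Fin 2 → ℝ) → ℝ) → ((Fin 2 → ℝ) → ℝ))
    (c : (Fin 2 → ℝ) → ℝ) : ZMod n → ((Fin 2 → ℝ) → ℝ) :=
  fun i => Tpow n i (ψ c)

theorem Rot_mul_Rot (a b : ℝ) : Rot a * Rot b = Rot (a + b) := by
  rw [Rot, Rot, Rot, mul_fin_two, Real.cos_add, Real.sin_add]
  congr 1
  ring_nf

theorem Rot_zero : Rot 0 = 1 := by
  ext i j
  fin_cases i <;> fin_cases j <;> simp [Rot]

theorem Rot_neg_mulVec_Rot_mulVec (θ : ℝ) (x : Fin 2 → ℝ) :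
    (Rot (-θ)).mulVec ((Rot θ).mulVec x) = x := by
  rw [mulVec_mulVec, Rot_mul_Rot, neg_add_cancel, Rot_zero, one_mulVec]

theorem Tpow_comm (n : ℕ) (i j : ZMod n) (f : (Fin 2 → ℝ) → ℝ) :
    Tpow n i (Tpow n j f) = Tpow n j (Tpow n i f) := by
  funext x
  simp only [Tpow, mulVec_mulVec, Rot_mul_Rot, add_comm]

theorem PsiLift_Tpow_of_map_Tpow (n : ℕ) (ψ : ((Fin 2 → ℝ) → ℝ) → ((Fin 2 → ℝ) → ℝ))
    {g : ZMod n} {c : (Fin 2 → ℝ) → ℝ} (hψ : ψ (Tpow n g c) = Tpow n g (ψ c)) :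
    PsiLift n ψ (Tpow n g c) = fun i => Tpow n g (PsiLift n ψ c i) := by
  funext i
  rw [PsiLift, PsiLift, hψ, Tpow_comm]

theorem xcorrN_comp_Rot (n : ℕ) (K : ZMod n → ((Fin 2 → ℝ) → ℝ)) (h : (Fin 2 → ℝ) → ℝ)
    {θ : ℝ} (σ : (Fin 2 → ℤ) ≃ (Fin 2 → ℤ))
    (hσ : ∀ w, toR (σ w) = (Rot θ).mulVec (toR w)) (v : Fin 2 → ℝ) (i : ZMod n) :
    xcorrN n (fun j x => K j ((Rot (-θ)).mulVec x)) (fun x => h ((Rot (-θ)).mulVec x)) v i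
      = xcorrN n K h ((Rot (-θ)).mulVec v) i := by
  simp only [xcorrN]
  rw [← σ.tsum_eq]
  congr 1
  funext w
  rw [hσ, mulVec_add, Rot_neg_mulVec_Rot_mulVec]

theorem stmt7_general (n : ℕ)
    (ψ φ : ((Fin 2 → ℝ) → ℝ) → ((Fin 2 → ℝ) → ℝ))
    (hψ : ∀ (g : ZMod n) (c), ψ (Tpow n g c) = Tpow n g (ψ c))
    (hφ : ∀ (g : ZMod n) (o), φ (Tpow n g o) = Tpow n g (φ o))
    (hlat : ∀ i : ZMod n, ∃ σ : (Fin 2 → ℤ) ≃ (Fin 2 → ℤ),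
      ∀ w : Fin 2 → ℤ, toR (σ w) = (Rot (2 * Real.pi * i.val / n)).mulVec (toR w))
    (c o : (Fin 2 → ℝ) → ℝ) (g : ZMod n) :
    xcorrN n (PsiLift n ψ (Tpow n g c)) (φ (Tpow n g o))
      = fun x i => xcorrN n (PsiLift n ψ c) (φ o)
          ((Rot (-(2 * Real.pi * g.val / n))).mulVec x) i := by
  funext v i
  obtain ⟨σ, hσ⟩ := hlat g
  rw [PsiLift_Tpow_of_map_Tpow n ψ (hψ g c), hφ]
  exact xcorrN_comp_Rot n (PsiLift n ψ c) (φ o) σ hσ v i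

/-- Invariance property (`g₁ = g₂ = g` in Proposition 2): a simultaneous rotation of both the
crop and the scene by `g ∈ Cₙ` rotates the output pixelwise but leaves the channel order
unchanged: `Ψ(T_g⁰ c) ⋆ φ(T_g⁰ o) = T_g⁰(Ψ(c) ⋆ φ(o))`. -/
theorem stmt7 (n : ℕ) [NeZero n]
    (ψ φ : ((Fin 2 → ℝ) → ℝ) → ((Fin 2 → ℝ) → ℝ))
    (hψ : ∀ (g : ZMod n) (c), ψ (Tpow n g c) = Tpow n g (ψ c))
    (hφ : ∀ (g : ZMod n) (o), φ (Tpow n g o) = Tpow n g (φ o))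
    (hfin : ∀ (c : (Fin 2 → ℝ) → ℝ) (i : ZMod n),
      (Function.support fun w : Fin 2 → ℤ => PsiLift n ψ c i (toR w)).Finite)
    (hlat : ∀ i : ZMod n, ∃ σ : (Fin 2 → ℤ) ≃ (Fin 2 → ℤ),
      ∀ w : Fin 2 → ℤ, toR (σ w) = (Rot (2 * Real.pi * i.val / n)).mulVec (toR w))
    (c o : (Fin 2 → ℝ) → ℝ) (g : ZMod n) :
    xcorrN n (PsiLift n ψ (Tpow n g c)) (φ (Tpow n g o))
      = fun x i => xcorrN n (PsiLift n ψ c) (φ o)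
          ((Rot (-(2 * Real.pi * g.val / n))).mulVec x) i :=
  stmt7_general n ψ φ hψ hφ hlat c o g
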